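/- For every η > 0 there exists δ > 0 such that σ_loc²(2+t, x) ≥ 2 − η for all t ∈ (0,1] and all x ∈ ℝ with |x| < δ; that is, near x = 0 the local variance on the time interval (2,3] stays uniformly (in t) above 2 − η. -/

import Mathlib

/-!
On `(2,3]` the `+` branch has variance `1` and the `−` branch variance `3`, so `σ_loc²` is the
mean of `1` and `3` weighted by `p₊` and `p₋`. There `Σ₋ = 3 + 3t ≤ 5 + t = Σ₊`, and comparing the
exponents gives `p₊ ≤ exp (x² / (2Σ₋)) p₋ ≤ exp (x²) p₋`. For `x² < log (1 + η)` the weight of the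
branch with variance `1` therefore exceeds that of the other by at most a factor `1 + η`, which
keeps the weighted mean above `2 − η`.
-/

open Real Set

/-- `Σ₊(t)`: integrated variance of the `+` branch of the mixing model. -/
noncomputable def Sigp (t : ℝ) : ℝ :=
  if t ≤ 1 then 2 * t else if t ≤ 2 then 3 * t - 1 else t + 3

/-- `Σ₋(t)`: integrated variance of the `−` branch of the mixing model. -/
noncomputable def Sigm (t : ℝ) : ℝ :=
  if t ≤ 1 then 2 * t else if t ≤ 2 then t + 1 else 3 * t - 3

/-- `σ₊²(t)`: instantaneous variance of the `+` branch. -/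
noncomputable def sigp2 (t : ℝ) : ℝ :=
  if t ≤ 1 then 2 else if t ≤ 2 then 3 else 1

/-- `σ₋²(t)`: instantaneous variance of the `−` branch. -/
noncomputable def sigm2 (t : ℝ) : ℝ :=
  if t ≤ 1 then 2 else if t ≤ 2 then 1 else 3

/-- `p₊(t,x) = Σ₊(t)^{-1/2} exp(−(x+Σ₊(t)/2)²/(2Σ₊(t)))`. -/
noncomputable def pplus (t x : ℝ) : ℝ :=
  Real.exp (-(x + Sigp t / 2) ^ 2 / (2 * Sigp t)) / Real.sqrt (Sigp t)

/-- `p₋(t,x) = Σ₋(t)^{-1/2} exp(−(x+Σ₋(t)/2)²/(2Σ₋(t)))`. -/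
noncomputable def pminus (t x : ℝ) : ℝ :=
  Real.exp (-(x + Sigm t / 2) ^ 2 / (2 * Sigm t)) / Real.sqrt (Sigm t)

/-- The Dupire local variance `σ_loc²(t,x)` of the Black–Scholes mixing model. -/
noncomputable def sigloc2 (t x : ℝ) : ℝ :=
  (sigp2 t * pplus t x + sigm2 t * pminus t x) / (pplus t x + pminus t x)

-- `pplus t = logPriceDensity (Sigp t)` and `pminus t = logPriceDensity (Sigm t)`.
noncomputable def logPriceDensity (S x : ℝ) : ℝ :=
  exp (-(x + S / 2) ^ 2 / (2 * S)) / √S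

lemma logPriceDensity_pos {S : ℝ} (hS : 0 < S) (x : ℝ) : 0 < logPriceDensity S x :=
  div_pos (exp_pos _) (sqrt_pos.2 hS)

lemma logPriceDensity_le_exp_mul {A B : ℝ} (hB : 0 < B) (hBA : B ≤ A) (x : ℝ) :
    logPriceDensity A x ≤ exp (x ^ 2 / (2 * B)) * logPriceDensity B x := by
  have hA : 0 < A := hB.trans_le hBA
  have hgap : x ^ 2 / (2 * B) + -(x + B / 2) ^ 2 / (2 * B) - -(x + A / 2) ^ 2 / (2 * A)
      = x ^ 2 / (2 * A) + (A - B) / 8 := by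
    field_simp
    ring
  have hexponent : -(x + A / 2) ^ 2 / (2 * A) ≤ x ^ 2 / (2 * B) + -(x + B / 2) ^ 2 / (2 * B) := by
    have : 0 ≤ x ^ 2 / (2 * A) := by positivity
    linarith
  calc logPriceDensity A x
      ≤ exp (-(x + A / 2) ^ 2 / (2 * A)) / √B :=
        div_le_div_of_nonneg_left (exp_pos _).le (sqrt_pos.2 hB) (sqrt_le_sqrt hBA)
    _ ≤ exp (x ^ 2 / (2 * B) + -(x + B / 2) ^ 2 / (2 * B)) / √B := by gcongr
    _ = exp (x ^ 2 / (2 * B)) * logPriceDensity B x := by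
        rw [exp_add, mul_div_assoc, logPriceDensity]

lemma midpoint_sub_le_weighted_mean {a b P M ε : ℝ} (hab : a ≤ b) (hP : 0 ≤ P) (hM : 0 < M)
    (hε : 0 ≤ ε) (hPM : P ≤ (1 + ε) * M) :
    (a + b) / 2 - ε * (b - a) / 2 ≤ (a * P + b * M) / (P + M) := by
  rw [le_div_iff₀ (by positivity)]
  have hslack : 0 ≤ M - P + ε * P + ε * M := by nlinarith
  nlinarith [mul_nonneg (sub_nonneg.2 hab) hslack]

lemma sigloc2_two_add {t : ℝ} (ht : 0 < t) (x : ℝ) :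
    sigloc2 (2 + t) x =
      (1 * logPriceDensity (5 + t) x + 3 * logPriceDensity (3 + 3 * t) x) /
        (logPriceDensity (5 + t) x + logPriceDensity (3 + 3 * t) x) := by
  have h1 : ¬2 + t ≤ 1 := by linarith
  have h2 : ¬2 + t ≤ 2 := by linarith
  have hSigp : Sigp (2 + t) = 5 + t := by simp only [Sigp, h1, h2, if_false]; ring
  have hSigm : Sigm (2 + t) = 3 + 3 * t := by simp only [Sigm, h1, h2, if_false]; ring
  simp only [sigloc2, pplus, pminus, sigp2, sigm2, hSigp, hSigm, h1, h2, if_false,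
    logPriceDensity]

/-- Near `x = 0` the local variance on the time interval `(2,3]` stays uniformly in `t`
above `2 − η`. -/
theorem sigloc2_ge_two_near_zero_third_interval :
    ∀ η > (0 : ℝ), ∃ δ > (0 : ℝ), ∀ t ∈ Set.Ioc (0 : ℝ) 1, ∀ x : ℝ,
      |x| < δ → 2 - η ≤ sigloc2 (2 + t) x := by
  intro η hη
  have hlog : 0 < log (1 + η) := log_pos (by linarith)
  refine ⟨√(log (1 + η)), sqrt_pos.2 hlog, fun t ⟨ht0, ht1⟩ x hx => ?_⟩
  have hx2 : x ^ 2 < log (1 + η) := by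
    rw [← sq_abs]
    exact (lt_sqrt (abs_nonneg x)).1 hx
  have hB : 0 < 3 + 3 * t := by linarith
  have hfactor : exp (x ^ 2 / (2 * (3 + 3 * t))) ≤ 1 + η := by
    rw [← exp_log (by linarith : 0 < 1 + η), exp_le_exp]
    linarith [div_le_self (sq_nonneg x) (by linarith : (1 : ℝ) ≤ 2 * (3 + 3 * t))]
  have hPM : logPriceDensity (5 + t) x ≤ (1 + η) * logPriceDensity (3 + 3 * t) x :=
    (logPriceDensity_le_exp_mul hB (by linarith) x).trans
      (mul_le_mul_of_nonneg_right hfactor (logPriceDensity_pos hB x).le)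
  rw [sigloc2_two_add ht0]
  convert midpoint_sub_le_weighted_mean (by norm_num : (1 : ℝ) ≤ 3)
    (logPriceDensity_pos (by linarith) x).le (logPriceDensity_pos hB x) hη.le hPM using 1
  ring
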